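/- arXiv:2603.02187 — 7 statements merged into one kernel-verified Lean document; each statement's English description precedes it below -/
import Mathlib

section
/- Let π, Π ∈ (0,1) and set K := O(π)/O(Π). Then (π − Π)/σ(π) = (K^{1/2} − K^{−1/2})·σ(Π). (This is the paper's canonical price-of-model-risk formula: the price-of-model-risk k^Π := (π − Π)/σ(π) equals (K^{1/2} − K^{−1/2})·σ(Π), where K is the ratio of the two likelihood-ratio (odds) levels.) -/
/-- Odds of a probability `p`. -/
noncomputable def odds (p : ℝ) : ℝ := p / (1 - p)

/-- Belief volatility of a probability `p`. -/
noncomputable def beliefVol (p : ℝ) : ℝ := Real.sqrt (p * (1 - p))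

/-- Canonical price-of-model-risk formula: with `π` the reference belief, `P` the
canonical risk-neutral-equivalent belief and `K = odds π / odds P`,
`(π − P)/σ(π) = (K^{1/2} − K^{−1/2})·σ(P)`. -/
theorem priceOfModelRisk_eq (π P : ℝ) (hπ : π ∈ Set.Ioo (0:ℝ) 1)
    (hP : P ∈ Set.Ioo (0:ℝ) 1) (K : ℝ) (hK : K = odds π / odds P) :
    (π - P) / beliefVol π = (Real.sqrt K - Real.sqrt K⁻¹) * beliefVol P := by
  obtain ⟨h1, h2⟩ := hπ
  obtain ⟨h3, h4⟩ := hP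
  have h2' : (0:ℝ) < 1 - π := by linarith
  have h4' : (0:ℝ) < 1 - P := by linarith
  have hK' : K = (π * (1 - P)) / ((1 - π) * P) := by
    rw [hK]; unfold odds; field_simp
  set a := Real.sqrt π with ha
  set b := Real.sqrt (1 - π) with hb
  set c := Real.sqrt P with hc
  set d := Real.sqrt (1 - P) with hd
  have ha0 : 0 < a := Real.sqrt_pos.mpr h1
  have hb0 : 0 < b := Real.sqrt_pos.mpr h2'
  have hc0 : 0 < c := Real.sqrt_pos.mpr h3
  have hd0 : 0 < d := Real.sqrt_pos.mpr h4'
  have ha2 : a ^ 2 = π := Real.sq_sqrt h1.le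
  have hb2 : b ^ 2 = 1 - π := Real.sq_sqrt h2'.le
  have hc2 : c ^ 2 = P := Real.sq_sqrt h3.le
  have hd2 : d ^ 2 = 1 - P := Real.sq_sqrt h4'.le
  have sK : Real.sqrt K = (a * d) / (b * c) := by
    rw [hK', Real.sqrt_div (by positivity), Real.sqrt_mul h1.le, Real.sqrt_mul h2'.le]
  have sKi : Real.sqrt K⁻¹ = (b * c) / (a * d) := by
    rw [Real.sqrt_inv, sK, inv_div]
  have bv1 : beliefVol π = a * b := by
    rw [beliefVol, Real.sqrt_mul h1.le]
  have bv2 : beliefVol P = c * d := by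
    rw [beliefVol, Real.sqrt_mul h3.le]
  rw [sK, sKi, bv1, bv2, ← ha2, ← hc2]
  have hb2' : b ^ 2 = 1 - a ^ 2 := by rw [hb2, ha2]
  have hd2' : d ^ 2 = 1 - c ^ 2 := by rw [hd2, hc2]
  have key : a ^ 2 - c ^ 2 = a ^ 2 * d ^ 2 - b ^ 2 * c ^ 2 := by
    rw [hb2', hd2']; ring
  rw [key]
  field_simp
end

section
/- Let c > 1 and define f : (0,1) → ℝ by f(v) := v(1−v)(c−1)/(cv + 1 − v). Then for every v ∈ (0,1), f(v) ≤ (√c − 1)/(√c + 1), with equality if and only if v = 1/(√c + 1). In particular the momentum-conditioned mean-excess attains its unique peak at conditioning level v_max = 1/(√c + 1) with peak value (√c − 1)/(√c + 1) (times the risk impact S). -/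
/-- Peak of the momentum-conditioned mean-excess: for `c > 1` and
`f(v) = v(1−v)(c−1)/(cv + 1 − v)` on `(0,1)`, one has
`f(v) ≤ (√c − 1)/(√c + 1)` with equality iff `v = 1/(√c + 1)`. -/
theorem momentum_peak (c : ℝ) (hc : 1 < c) (f : ℝ → ℝ)
    (hf : ∀ v, f v = v * (1 - v) * (c - 1) / (c * v + 1 - v)) :
    ∀ v ∈ Set.Ioo (0:ℝ) 1,
      f v ≤ (Real.sqrt c - 1) / (Real.sqrt c + 1) ∧
      (f v = (Real.sqrt c - 1) / (Real.sqrt c + 1) ↔ v = 1 / (Real.sqrt c + 1)) := by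
  intro v hv
  obtain ⟨hv0, hv1⟩ := hv
  set s := Real.sqrt c with hsdef
  have hc0 : (0:ℝ) ≤ c := by linarith
  have hs2 : s ^ 2 = c := Real.sq_sqrt hc0
  have hs1 : 1 < s := by nlinarith [Real.sqrt_nonneg c]
  have hD : 0 < c * v + 1 - v := by nlinarith
  have hs1' : 0 < s + 1 := by linarith
  rw [hf]
  refine ⟨?_, ?_, ?_⟩
  · rw [div_le_div_iff₀ hD hs1']
    nlinarith [mul_nonneg (by linarith : (0:ℝ) ≤ s - 1) (sq_nonneg ((s+1)*v - 1))]
  · intro h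
    rw [div_eq_div_iff hD.ne' hs1'.ne'] at h
    have key : ((s+1)*v - 1)^2 * (s - 1) = 0 := by
      linear_combination -h + (v*((s-1) - (s+1)*(1-v)))*hs2
    have h2 : (s+1)*v - 1 = 0 := by
      have := mul_eq_zero.mp key
      rcases this with h' | h'
      · exact pow_eq_zero_iff (by norm_num) |>.mp h'
      · linarith
    field_simp
    linarith
  · intro h
    subst h
    rw [div_eq_div_iff hD.ne' hs1'.ne']
    field_simp
    ring_nf
    nlinarith [hs2]
end

section
/- Let σ² > 0, ε ∈ {−1,+1}, μ := ε·σ²/2, H_p ∈ ℝ, ρ > 0, K > 0, v ∈ (0,1), and let φ be the density of gaussianReal(μ, σ²). Set z := log(v/(1−v)), t_K := 2(log K)/σ², t_p := 2H_p/σ². Then φ(H_p + log ρ + log K + z) / φ(H_p + log ρ − log K + z) = (ρ·v/(1−v))^{−t_K} · K^{−t_p + ε}. (This is the paper's momentum mix-ratio formula M_{t|v}(B) = (ρv/v̄)^{−t_K}·K^{−t_p − (−1)^B}, with ε = (−1)^{B+1}.) -/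
open ProbabilityTheory Real

/-- The paper's momentum mix-ratio formula: with `φ` the density of
`N(ε·σ²/2, σ²)`, `z = log O(v)`, `t_K = 2 log K/σ²`, `t_p = 2H_p/σ²`,
`φ(H_p + log ρ + log K + z)/φ(H_p + log ρ − log K + z)
  = (ρv/(1−v))^{−t_K}·K^{−t_p + ε}`. -/
theorem momentum_mix_ratio (σ2 : NNReal) (hσ2 : 0 < σ2)
    (ε : ℝ) (hε : ε ∈ ({-1, 1} : Set ℝ)) (μ : ℝ) (hμ : μ = ε * (σ2 : ℝ) / 2)
    (Hp : ℝ) (ρ K : ℝ) (hρ : 0 < ρ) (hK : 0 < K)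
    (v : ℝ) (hv : v ∈ Set.Ioo (0:ℝ) 1)
    (φ : ℝ → ℝ) (hφ : φ = gaussianPDFReal μ σ2)
    (z tK tp : ℝ) (hz : z = Real.log (v / (1 - v)))
    (htK : tK = 2 * Real.log K / (σ2 : ℝ)) (htp : tp = 2 * Hp / (σ2 : ℝ)) :
    φ (Hp + Real.log ρ + Real.log K + z) / φ (Hp + Real.log ρ - Real.log K + z) =
      (ρ * v / (1 - v)) ^ (-tK) * K ^ (-tp + ε) := by
  obtain ⟨hv0, hv1⟩ := hv
  have hs : (0:ℝ) < (σ2 : ℝ) := by exact_mod_cast hσ2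
  have hvv : 0 < v / (1 - v) := div_pos hv0 (by linarith)
  have hρv : 0 < ρ * v / (1 - v) := by
    rw [mul_div_assoc]; exact mul_pos hρ hvv
  have hC : (√(2 * π * (σ2:ℝ)))⁻¹ ≠ 0 := by
    positivity
  subst hφ
  rw [gaussianPDFReal_def]
  set a := Hp + Real.log ρ + Real.log K + z with ha
  set b := Hp + Real.log ρ - Real.log K + z with hb
  have hlhs : (√(2 * π * (σ2:ℝ)))⁻¹ * rexp (-(a - μ)^2 / (2 * (σ2:ℝ))) /
      ((√(2 * π * (σ2:ℝ)))⁻¹ * rexp (-(b - μ)^2 / (2 * (σ2:ℝ)))) =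
      rexp (-(a - μ)^2 / (2 * (σ2:ℝ)) - -(b - μ)^2 / (2 * (σ2:ℝ))) := by
    rw [mul_div_mul_left _ _ hC, ← Real.exp_sub]
  simp only [hlhs]
  rw [Real.rpow_def_of_pos hρv, Real.rpow_def_of_pos hK, ← Real.exp_add]
  congr 1
  have hlogρv : Real.log (ρ * v / (1 - v)) = Real.log ρ + z := by
    rw [mul_div_assoc, Real.log_mul (ne_of_gt hρ) (ne_of_gt hvv), hz]
  rw [hlogρv, ha, hb, hμ, htK, htp]
  field_simp
  ring
end

section
/- Let a : ℕ → ℝ and consider the infinite product probability measures P₊ := ⨂_{n∈ℕ} gaussianReal(aₙ, 1) and P₋ := ⨂_{n∈ℕ} gaussianReal(0, 1) on ℕ → ℝ. Then: (i) for every finite n, the restrictions (finite products over Fin n) of P₊ and P₋ are mutually absolutely continuous (equivalent); and (ii) if ∑ₙ aₙ² = ∞ (i.e. (aₙ²) is not summable), then P₊ and P₋ are mutually singular. (This is the paper's structure of regular inference with resolution: W₊|_t ∼ W₋|_t at every finite stage, while W₊ ⟂ W₋ overall, which guarantees risk-resolution.) -/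
/-!
At a finite stage both laws are products of Gaussians with unit variance, each equivalent to
Lebesgue measure, and absolute continuity passes to finite products.

For singularity, take the likelihood-ratio test at stage `n`, rejecting `∏ N(0, 1)` when
`∑ aᵢ xᵢ ≥ Bₙ / 2` with `Bₙ = ∑_{i<n} aᵢ²`. Under either law, with `mᵢ` the mean of `xᵢ`, the
statistic `∑ aᵢ (xᵢ - mᵢ)` is sub-Gaussian with variance proxy `Bₙ`, so both error
probabilities are at most `exp (-Bₙ / 8)`.
Since `Bₙ → ∞` we can choose stages along which the errors are summable; by Borel–Cantelli
the limsup of the rejection regions is then `P₋`-null and `P₊`-conull.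
-/

open MeasureTheory ProbabilityTheory Filter Real
open scoped ENNReal NNReal

lemma neg_half_sq_div_two_mul_self (B : ℝ) : -(B / 2) ^ 2 / (2 * B) = -B / 8 := by
  rcases eq_or_ne B 0 with rfl | hB
  · simp
  · field_simp; ring

lemma exists_summable_exp_neg_sum_fin_div {f : ℕ → ℝ} (hf : 0 ≤ f) (hsum : ¬ Summable f)
    {c : ℝ} (hc : 0 < c) : ∃ N : ℕ → ℕ, Summable fun k => exp (-(∑ i : Fin (N k), f i) / c) := by
  have htendsto : Tendsto (fun n => ∑ i : Fin n, f i) atTop atTop := by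
    simpa [Fin.sum_univ_eq_sum_range] using (not_summable_iff_tendsto_nat_atTop_of_nonneg hf).1 hsum
  choose N hN using fun k : ℕ => (htendsto.eventually_ge_atTop (k : ℝ)).exists
  refine ⟨N, ?_⟩
  simpa [neg_div, div_eq_inv_mul] using summable_exp_nat_mul_of_ge (neg_lt_zero.2 (inv_pos.2 hc)) hN

namespace MeasureTheory.Measure

theorem AbsolutelyContinuous.pi_fin {n : ℕ} {α : Fin n → Type*} [∀ i, MeasurableSpace (α i)]
    {μ ν : ∀ i, Measure (α i)} [∀ i, SigmaFinite (μ i)] [∀ i, SigmaFinite (ν i)]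
    (h : ∀ i, μ i ≪ ν i) : Measure.pi μ ≪ Measure.pi ν := by
  induction n with
  | zero => rw [pi_of_empty, pi_of_empty]
  | succ n ih =>
    rw [← (measurePreserving_piFinSuccAbove μ 0).symm.map_eq,
      ← (measurePreserving_piFinSuccAbove ν 0).symm.map_eq]
    exact ((h 0).prod (ih fun i => h _)).map (MeasurableEquiv.measurable _)

theorem AbsolutelyContinuous.pi {ι : Type*} [Fintype ι] {α : ι → Type*}
    [∀ i, MeasurableSpace (α i)] {μ ν : ∀ i, Measure (α i)} [∀ i, SigmaFinite (μ i)]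
    [∀ i, SigmaFinite (ν i)] (h : ∀ i, μ i ≪ ν i) : Measure.pi μ ≪ Measure.pi ν := by
  let e := (Fintype.equivFin ι).symm
  rw [← (measurePreserving_piCongrLeft μ e).map_eq, ← (measurePreserving_piCongrLeft ν e).map_eq]
  exact (pi_fin fun i => h (e i)).map (MeasurableEquiv.measurable _)

theorem mutuallySingular_of_tsum_ne_top {α : Type*} [MeasurableSpace α] {μ ν : Measure α}
    {s : ℕ → Set α} (hs : ∀ n, MeasurableSet (s n)) (hμ : ∑' n, μ (s n) ≠ ∞)
    (hν : ∑' n, ν (s n)ᶜ ≠ ∞) : μ ⟂ₘ ν := by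
  refine ⟨limsup s atTop, MeasurableSet.measurableSet_limsup hs,
    measure_limsup_atTop_eq_zero hμ, ?_⟩
  have : ∀ᵐ x ∂ν, x ∈ limsup s atTop := (ae_eventually_notMem hν).mono fun x hx =>
    mem_limsup_iff_frequently_mem.2 (hx.mono fun _ => not_not.1).frequently
  exact ae_iff.1 this

end MeasureTheory.Measure

namespace ProbabilityTheory

lemma gaussianReal_absolutelyContinuous_gaussianReal (m₁ m₂ : ℝ) {v₁ v₂ : ℝ≥0} (hv₁ : v₁ ≠ 0)
    (hv₂ : v₂ ≠ 0) : gaussianReal m₁ v₁ ≪ gaussianReal m₂ v₂ :=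
  (gaussianReal_absolutelyContinuous m₁ hv₁).trans (gaussianReal_absolutelyContinuous' m₂ hv₂)

lemma hasSubgaussianMGF_sub_gaussianReal (m : ℝ) (v : ℝ≥0) :
    HasSubgaussianMGF (fun x => x - m) v (gaussianReal m v) := by
  rw [← HasSubgaussianMGF.id_map_iff (by fun_prop), gaussianReal_map_sub_const, sub_self]
  exact ⟨integrable_exp_mul_gaussianReal, fun t => by simp [mgf_id_gaussianReal]⟩

lemma hasSubgaussianMGF_sum_mul_sub_pi_gaussianReal {ι : Type*} [Fintype ι] (m b : ι → ℝ)
    (v : ι → ℝ≥0) :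
    HasSubgaussianMGF (fun x => ∑ i, b i * (x i - m i)) (∑ i, ⟨b i ^ 2, sq_nonneg _⟩ * v i)
      (Measure.pi fun i => gaussianReal (m i) (v i)) := by
  refine HasSubgaussianMGF.sum_of_iIndepFun
    (iIndepFun_pi (X := fun i y => b i * (y - m i)) fun i => by fun_prop) fun i _ => ?_
  have h := (hasSubgaussianMGF_sub_gaussianReal (m i) (v i)).const_mul (b i)
  rw [← (measurePreserving_eval (fun i => gaussianReal (m i) (v i)) i).map_eq] at h
  exact h.of_map (X := fun y => b i * (y - m i)) (measurable_pi_apply i).aemeasurable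

lemma pi_gaussianReal_real_le_sum_mul_sub_le {ι : Type*} [Fintype ι] (m b : ι → ℝ)
    (v : ι → ℝ≥0) {ε : ℝ} (hε : 0 ≤ ε) :
    (Measure.pi fun i => gaussianReal (m i) (v i)).real {x | ε ≤ ∑ i, b i * (x i - m i)} ≤
      exp (-ε ^ 2 / (2 * ∑ i, b i ^ 2 * v i)) := by
  convert (hasSubgaussianMGF_sum_mul_sub_pi_gaussianReal m b v).measure_ge_le hε using 5
  push_cast
  rfl

section GaussianShift

variable {ι : Type*} [Fintype ι]

/-- The set where the likelihood ratio `exp (∑ aᵢ xᵢ - ∑ aᵢ² / 2)` of `∏ N(aᵢ, 1)` against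
`∏ N(0, 1)` is at least one. -/
def gaussianLRSet (a : ι → ℝ) : Set (ι → ℝ) := {x | (∑ i, a i ^ 2) / 2 ≤ ∑ i, a i * x i}

lemma measurableSet_gaussianLRSet (a : ι → ℝ) : MeasurableSet (gaussianLRSet a) :=
  measurableSet_le measurable_const (by fun_prop)

lemma pi_gaussianReal_zero_gaussianLRSet_le (a : ι → ℝ) :
    (Measure.pi fun _ : ι => gaussianReal 0 1) (gaussianLRSet a) ≤
      ENNReal.ofReal (exp (-(∑ i, a i ^ 2) / 8)) := by
  rw [← ofReal_measureReal]
  gcongr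
  convert pi_gaussianReal_real_le_sum_mul_sub_le (fun _ => 0) a (fun _ => 1)
    (by positivity : 0 ≤ (∑ i, a i ^ 2) / 2) using 1
  · simp [gaussianLRSet]
  · simp [neg_half_sq_div_two_mul_self]

lemma pi_gaussianReal_gaussianLRSet_compl_le (a : ι → ℝ) :
    (Measure.pi fun i => gaussianReal (a i) 1) (gaussianLRSet a)ᶜ ≤
      ENNReal.ofReal (exp (-(∑ i, a i ^ 2) / 8)) := by
  have hsub : (gaussianLRSet a)ᶜ ⊆ {x | (∑ i, a i ^ 2) / 2 ≤ ∑ i, -a i * (x i - a i)} := by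
    intro x hx
    have : ∑ i, -a i * (x i - a i) = ∑ i, a i ^ 2 - ∑ i, a i * x i := by
      rw [← Finset.sum_sub_distrib]; congr 1 with i; ring
    simp only [gaussianLRSet, Set.mem_compl_iff, Set.mem_ofPred_eq, not_le] at hx ⊢
    linarith
  refine (measure_mono hsub).trans ?_
  rw [← ofReal_measureReal]
  gcongr
  convert pi_gaussianReal_real_le_sum_mul_sub_le a (fun i => -a i) (fun _ => 1)
    (by positivity : 0 ≤ (∑ i, a i ^ 2) / 2) using 1
  simp [neg_half_sq_div_two_mul_self]

end GaussianShift

end ProbabilityTheory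

theorem regular_inference_equivalent_then_singular_general (a : ℕ → ℝ)
    (Pp Pm : Measure (ℕ → ℝ))
    (hPp : ∀ n : ℕ, Measure.map (fun ω (i : Fin n) => ω i) Pp =
      Measure.pi fun i : Fin n => gaussianReal (a i) 1)
    (hPm : ∀ n : ℕ, Measure.map (fun ω (i : Fin n) => ω i) Pm =
      Measure.pi fun _ : Fin n => gaussianReal 0 1) :
    (∀ n : ℕ,
      (Measure.pi fun i : Fin n => gaussianReal (a i) 1) ≪
        (Measure.pi fun _ : Fin n => gaussianReal 0 1) ∧
      (Measure.pi fun _ : Fin n => gaussianReal 0 1) ≪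
        (Measure.pi fun i : Fin n => gaussianReal (a i) 1)) ∧
    (¬ Summable (fun n => (a n)^2) → Pp ⟂ₘ Pm) := by
  refine ⟨fun n => ⟨.pi fun i => ?_, .pi fun i => ?_⟩, fun hsum => ?_⟩
  iterate 2 exact gaussianReal_absolutelyContinuous_gaussianReal _ _ one_ne_zero one_ne_zero
  obtain ⟨N, hN⟩ := exists_summable_exp_neg_sum_fin_div (fun n => sq_nonneg (a n)) hsum
    (by norm_num : (0 : ℝ) < 8)
  have hproj (n : ℕ) : Measurable fun (ω : ℕ → ℝ) (i : Fin n) => ω i := by fun_prop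
  let S k := (fun (ω : ℕ → ℝ) (i : Fin (N k)) => ω i) ⁻¹' gaussianLRSet fun i : Fin (N k) => a i
  have hS k : MeasurableSet (S k) := hproj _ (measurableSet_gaussianLRSet _)
  refine (Measure.mutuallySingular_of_tsum_ne_top hS
    (ne_top_of_le_ne_top hN.tsum_ofReal_ne_top (ENNReal.tsum_le_tsum fun k => ?_))
    (ne_top_of_le_ne_top hN.tsum_ofReal_ne_top (ENNReal.tsum_le_tsum fun k => ?_))).symm
  · rw [← Measure.map_apply (hproj _) (measurableSet_gaussianLRSet _), hPm]
    exact pi_gaussianReal_zero_gaussianLRSet_le _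
  · rw [← Set.preimage_compl, ← Measure.map_apply (hproj _) (measurableSet_gaussianLRSet _).compl,
      hPp]
    exact pi_gaussianReal_gaussianLRSet_compl_le _

/-- Regular inference with resolution: let `P₊`, `P₋` be the infinite product
measures on `ℕ → ℝ` with one-dimensional factors `N(aₙ,1)` resp. `N(0,1)`
(characterized by their finite-dimensional marginals). Then (i) at every finite
stage the finite products are mutually absolutely continuous, while (ii) if
`∑ aₙ² = ∞` then `P₊` and `P₋` are mutually singular. -/
theorem regular_inference_equivalent_then_singular (a : ℕ → ℝ)
    (Pp Pm : Measure (ℕ → ℝ)) [IsProbabilityMeasure Pp] [IsProbabilityMeasure Pm]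
    (hPp : ∀ n : ℕ, Measure.map (fun ω (i : Fin n) => ω i) Pp =
      Measure.pi fun i : Fin n => gaussianReal (a i) 1)
    (hPm : ∀ n : ℕ, Measure.map (fun ω (i : Fin n) => ω i) Pm =
      Measure.pi fun _ : Fin n => gaussianReal 0 1) :
    (∀ n : ℕ,
      (Measure.pi fun i : Fin n => gaussianReal (a i) 1) ≪
        (Measure.pi fun _ : Fin n => gaussianReal 0 1) ∧
      (Measure.pi fun _ : Fin n => gaussianReal 0 1) ≪
        (Measure.pi fun i : Fin n => gaussianReal (a i) 1)) ∧
    (¬ Summable (fun n => (a n)^2) → Pp ⟂ₘ Pm) :=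
  regular_inference_equivalent_then_singular_general a Pp Pm hPp hPm
end

section
/- Let a : ℕ → ℝ with ∑ₙ aₙ² < ∞ (i.e. (aₙ²) summable). Then the infinite product probability measures P₊ := ⨂_{n∈ℕ} gaussianReal(aₙ, 1) and P₋ := ⨂_{n∈ℕ} gaussianReal(0, 1) on ℕ → ℝ are mutually absolutely continuous (equivalent). (Finite cumulative squared signal-to-noise implies the two test measures remain equivalent and the model-risk never resolves.) -/
/-!
On the cylinders over the first `n` coordinates, `P₊` has density
`Lₙ(ω) = ∏_{i<n} dN(aᵢ,1)/dN(0,1)(ωᵢ)` with respect to `P₋`, and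
`∫ Lₙ² dP₋ = exp (∑_{i<n} aᵢ²)` is bounded uniformly in `n` by `exp (∑ aᵢ²)`.
Since `x ≤ K + x²/K`, every cylinder `C` satisfies `P₊ C ≤ K · P₋ C + exp (∑ aᵢ²) / K`,
so `P₊` is uniformly absolutely continuous with respect to `P₋` on the algebra of cylinders.
Approximating a measurable set by cylinders in `(P₊ + P₋)`-measure carries this over to the
whole σ-algebra. The argument is symmetric in the two mean sequences.
-/

open MeasureTheory ProbabilityTheory Real Set
open scoped ENNReal NNReal symmDiff

namespace MeasureTheory

theorem Measure.absolutelyContinuous_of_isSetAlgebra {α : Type*} [mα : MeasurableSpace α]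
    {P Q : Measure α} [IsFiniteMeasure P] [IsFiniteMeasure Q] {C : Set (Set α)}
    (hC : IsSetAlgebra C) (hgen : mα = MeasurableSpace.generateFrom C)
    (h : ∀ ε > 0, ∃ δ > 0, ∀ s ∈ C, Q s < δ → P s ≤ ε) : P ≪ Q := by
  refine Measure.AbsolutelyContinuous.mk fun A hA hQA => le_antisymm
    (ENNReal.le_of_forall_pos_le_add fun ε hε _ => ?_) zero_le
  have hε2 : (0 : ℝ≥0∞) < ε / 2 := ENNReal.half_pos (by exact_mod_cast hε.ne')
  obtain ⟨δ, hδ, hPQ⟩ := h (ε / 2) hε2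
  obtain ⟨t, htC, ht⟩ := exists_measure_symmDiff_lt_of_generateFrom_isSetRing (μ := P + Q)
    hC.isSetRing ⟨{univ}, countable_singleton _, by simpa using hC.univ_mem, by simp⟩
    hgen hA (lt_min hδ hε2)
  rw [Measure.add_apply, lt_min_iff] at ht
  have hQt : Q t < δ := calc
    Q t ≤ Q (t ∆ A) + Q A := tsub_le_iff_right.mp le_measure_symmDiff
    _ = Q (t ∆ A) := by rw [hQA, add_zero]
    _ ≤ P (t ∆ A) + Q (t ∆ A) := le_add_self
    _ < δ := ht.1
  calc P A ≤ P (t ∆ A) + P t := by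
        rw [symmDiff_comm]; exact tsub_le_iff_right.mp le_measure_symmDiff
    _ ≤ ε / 2 + ε / 2 := add_le_add (le_self_add.trans ht.2.le) (hPQ t htC hQt)
    _ = 0 + ε := by rw [ENNReal.add_halves, zero_add]

theorem exists_pos_forall_lt_le_of_le_mul_add_div {α : Type*} {P Q : Set α → ℝ≥0∞}
    {C : Set (Set α)} {c : ℝ≥0∞} (hc : c ≠ ∞)
    (h : ∀ K ≠ 0, ∀ s ∈ C, P s ≤ K * Q s + c / K) :
    ∀ ε > 0, ∃ δ > 0, ∀ s ∈ C, Q s < δ → P s ≤ ε := by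
  intro ε hε
  obtain ⟨n, hn⟩ := ENNReal.exists_nat_mul_gt (ENNReal.half_pos hε.ne').ne' hc
  have hn0 : (n : ℝ≥0∞) ≠ 0 := by rintro h; simp [h] at hn
  refine ⟨ε / 2 / n, ENNReal.div_pos_iff.mpr ⟨(ENNReal.half_pos hε.ne').ne', by simp⟩,
    fun s hs hQs => (h n hn0 s hs).trans ?_⟩
  calc (n : ℝ≥0∞) * Q s + c / n ≤ n * (ε / 2 / n) + ε / 2 :=
        add_le_add (by gcongr) (ENNReal.div_le_of_le_mul (by rw [mul_comm]; exact hn.le))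
    _ ≤ ε / 2 + ε / 2 := by gcongr; exact ENNReal.mul_div_le
    _ = ε := ENNReal.add_halves ε

theorem setLIntegral_le_mul_measure_add_lintegral_sq_div {α : Type*} [MeasurableSpace α]
    (μ : Measure α) (f : α → ℝ≥0∞) (s : Set α) {K : ℝ≥0∞} (hK : K ≠ 0) :
    ∫⁻ x in s, f x ∂μ ≤ K * μ s + (∫⁻ x, f x ^ 2 ∂μ) / K := by
  have hpt : ∀ x, f x ≤ K + f x ^ 2 * K⁻¹ := by
    intro x
    rcases le_total (f x) K with hle | hge
    · exact le_add_right hle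
    · rcases eq_or_ne K ∞ with rfl | hK_top
      · simp
      refine le_add_left ?_
      calc f x = f x * 1 := (mul_one _).symm
        _ ≤ f x * (f x * K⁻¹) := by
            gcongr
            rw [← div_eq_mul_inv]
            exact (ENNReal.le_div_iff_mul_le (.inl hK) (.inl hK_top)).mpr (by rwa [one_mul])
        _ = f x ^ 2 * K⁻¹ := by ring
  calc ∫⁻ x in s, f x ∂μ ≤ ∫⁻ x in s, (K + f x ^ 2 * K⁻¹) ∂μ := lintegral_mono hpt
    _ = K * μ s + (∫⁻ x in s, f x ^ 2 ∂μ) * K⁻¹ := by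
        rw [lintegral_add_left measurable_const, setLIntegral_const, mul_comm,
          lintegral_mul_const' _ _ (ENNReal.inv_ne_top.mpr hK)]
    _ ≤ K * μ s + (∫⁻ x, f x ^ 2 ∂μ) / K := by
        rw [div_eq_mul_inv]; gcongr _ + ?_ * _; exact setLIntegral_le_lintegral _ _

theorem lintegral_fin_nat_prod_eq_prod {n : ℕ} {X : Type*} [MeasurableSpace X]
    (μ : Fin n → Measure X) [∀ i, SigmaFinite (μ i)] (f : Fin n → X → ℝ≥0∞)
    (hf : ∀ i, Measurable (f i)) :
    ∫⁻ x, ∏ i, f i (x i) ∂Measure.pi μ = ∏ i, ∫⁻ y, f i y ∂μ i := by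
  induction n with
  | zero => simp
  | succ n ih =>
    rw [← ((measurePreserving_piFinSuccAbove μ 0).symm).lintegral_comp_emb
      (MeasurableEquiv.measurableEmbedding _)]
    simp_rw [MeasurableEquiv.piFinSuccAbove_symm_apply, Fin.insertNthEquiv,
      Fin.prod_univ_succ, Fin.insertNth_zero, Equiv.coe_fn_mk, Fin.cons_succ,
      Fin.zero_succAbove, cast_eq, Fin.cons_zero]
    rw [lintegral_prod_mul (f := f 0) (g := fun y : Fin n → X => ∏ i : Fin n, f i.succ (y i))
      (hf 0).aemeasurable
      (Finset.measurable_prod _ fun i _ => (hf i.succ).comp (measurable_pi_apply i)).aemeasurable,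
      ih _ _ fun i => hf i.succ]

theorem Measure.pi_eq_withDensity {n : ℕ} {X : Type*} [MeasurableSpace X]
    {μ ν : Fin n → Measure X} [∀ i, SigmaFinite (μ i)] [∀ i, SigmaFinite (ν i)]
    {f : Fin n → X → ℝ≥0∞} (hf : ∀ i, Measurable (f i))
    (hν : ∀ i, ν i = (μ i).withDensity (f i)) :
    Measure.pi ν = (Measure.pi μ).withDensity fun x => ∏ i, f i (x i) := by
  refine Measure.pi_eq fun s hs => ?_
  rw [withDensity_apply _ (.univ_pi hs), Measure.restrict_pi_pi,
    lintegral_fin_nat_prod_eq_prod _ _ hf]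
  simp_rw [hν, withDensity_apply _ (hs _)]

theorem exists_eq_preimage_fin_of_mem_measurableCylinders {X : Type*} [MeasurableSpace X]
    {s : Set (ℕ → X)} (hs : s ∈ measurableCylinders fun _ => X) :
    ∃ n, ∃ B : Set (Fin n → X), MeasurableSet B ∧ s = (fun ω (i : Fin n) => ω i) ⁻¹' B := by
  obtain ⟨I, S, hS, rfl⟩ := (mem_measurableCylinders s).mp hs
  have hI : ∀ i ∈ I, i < I.sup id + 1 := fun i hi =>
    Nat.lt_succ_of_le (Finset.le_sup (f := id) hi)
  exact ⟨I.sup id + 1, (fun x (i : I) => x ⟨i, hI i i.2⟩) ⁻¹' S,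
    measurable_pi_lambda _ (fun _ => measurable_pi_apply _) hS, rfl⟩

end MeasureTheory

namespace ProbabilityTheory

noncomputable def gaussianLikelihoodRatio (u v : ℝ) (w : ℝ≥0) (x : ℝ) : ℝ≥0∞ :=
  ENNReal.ofReal (exp ((u - v) * (x - (u + v) / 2) / w))

theorem measurable_gaussianLikelihoodRatio (u v : ℝ) (w : ℝ≥0) :
    Measurable (gaussianLikelihoodRatio u v w) := by
  unfold gaussianLikelihoodRatio; fun_prop

theorem gaussianReal_eq_withDensity (u v : ℝ) {w : ℝ≥0} (hw : w ≠ 0) :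
    gaussianReal u w = (gaussianReal v w).withDensity (gaussianLikelihoodRatio u v w) := by
  rw [gaussianReal_of_var_ne_zero u hw, gaussianReal_of_var_ne_zero v hw,
    ← withDensity_mul _ (measurable_gaussianPDF v w)
      (measurable_gaussianLikelihoodRatio u v w)]
  congr 1 with x
  have hw' : (w : ℝ) ≠ 0 := by exact_mod_cast hw
  rw [Pi.mul_apply, gaussianPDF, gaussianPDF, gaussianLikelihoodRatio,
    ← ENNReal.ofReal_mul (gaussianPDFReal_nonneg _ _ _), gaussianPDFReal, gaussianPDFReal]
  rw [mul_assoc _ (exp _) (exp _), ← exp_add]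
  congr 3
  field_simp
  ring

theorem lintegral_gaussianLikelihoodRatio_sq (u v : ℝ) {w : ℝ≥0} (hw : w ≠ 0) :
    ∫⁻ x, gaussianLikelihoodRatio u v w x ^ 2 ∂gaussianReal v w
      = ENNReal.ofReal (exp ((u - v) ^ 2 / w)) := by
  have hw' : (w : ℝ) ≠ 0 := by exact_mod_cast hw
  have hsq : ∀ x, gaussianLikelihoodRatio u v w x ^ 2
      = ENNReal.ofReal (exp (-(u ^ 2 - v ^ 2) / w) * exp (2 * (u - v) / w * x)) := by
    intro x
    rw [gaussianLikelihoodRatio, ← ENNReal.ofReal_pow (exp_pos _).le, ← exp_nat_mul, ← exp_add]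
    congr 2
    ring
  have hmgf := congrFun (mgf_id_gaussianReal (μ := v) (v := w)) (2 * (u - v) / w)
  simp only [mgf, id] at hmgf
  simp_rw [hsq]
  rw [← ofReal_integral_eq_lintegral_ofReal ((integrable_exp_mul_gaussianReal _).const_mul _)
    (.of_forall fun _ => by positivity), integral_const_mul, hmgf, ← exp_add]
  congr 2
  field_simp
  ring

theorem pi_gaussianReal_eq_withDensity {n : ℕ} (u v : Fin n → ℝ) {w : ℝ≥0} (hw : w ≠ 0) :
    Measure.pi (fun i => gaussianReal (u i) w)
      = (Measure.pi fun i => gaussianReal (v i) w).withDensity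
          fun x => ∏ i, gaussianLikelihoodRatio (u i) (v i) w (x i) :=
  Measure.pi_eq_withDensity (fun _ => measurable_gaussianLikelihoodRatio _ _ _)
    fun i => gaussianReal_eq_withDensity (u i) (v i) hw

theorem lintegral_prod_gaussianLikelihoodRatio_sq {n : ℕ} (u v : Fin n → ℝ) {w : ℝ≥0}
    (hw : w ≠ 0) :
    ∫⁻ x, (∏ i, gaussianLikelihoodRatio (u i) (v i) w (x i)) ^ 2
        ∂Measure.pi (fun i => gaussianReal (v i) w)
      = ENNReal.ofReal (exp (∑ i, (u i - v i) ^ 2 / w)) := by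
  simp_rw [← Finset.prod_pow]
  rw [lintegral_fin_nat_prod_eq_prod _ _
    fun _ => (measurable_gaussianLikelihoodRatio _ _ _).pow_const 2]
  simp_rw [lintegral_gaussianLikelihoodRatio_sq _ _ hw]
  rw [exp_sum, ENNReal.ofReal_prod_of_nonneg fun _ _ => (exp_pos _).le]

theorem pi_gaussianReal_le_mul_add_div {n : ℕ} (u v : Fin n → ℝ) {w : ℝ≥0} (hw : w ≠ 0)
    {K : ℝ≥0∞} (hK : K ≠ 0) (B : Set (Fin n → ℝ)) :
    Measure.pi (fun i => gaussianReal (u i) w) B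
      ≤ K * Measure.pi (fun i => gaussianReal (v i) w) B
        + ENNReal.ofReal (exp (∑ i, (u i - v i) ^ 2 / w)) / K := by
  rw [pi_gaussianReal_eq_withDensity u v hw, withDensity_apply' _ B,
    ← lintegral_prod_gaussianLikelihoodRatio_sq u v hw]
  exact setLIntegral_le_mul_measure_add_lintegral_sq_div _ _ _ hK

theorem absolutelyContinuous_of_gaussianReal_marginals {w : ℝ≥0} (hw : w ≠ 0) (u v : ℕ → ℝ)
    (hsum : Summable fun i => (u i - v i) ^ 2)
    (P Q : Measure (ℕ → ℝ)) [IsFiniteMeasure P] [IsFiniteMeasure Q]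
    (hP : ∀ n : ℕ, Measure.map (fun ω (i : Fin n) => ω i) P =
      Measure.pi fun i : Fin n => gaussianReal (u i) w)
    (hQ : ∀ n : ℕ, Measure.map (fun ω (i : Fin n) => ω i) Q =
      Measure.pi fun i : Fin n => gaussianReal (v i) w) :
    P ≪ Q := by
  refine Measure.absolutelyContinuous_of_isSetAlgebra isSetAlgebra_measurableCylinders
    generateFrom_measurableCylinders.symm <| exists_pos_forall_lt_le_of_le_mul_add_div
      (c := ENNReal.ofReal (exp (∑' i, (u i - v i) ^ 2 / w))) ENNReal.ofReal_ne_top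
      fun K hK s hs => ?_
  obtain ⟨n, B, hB, rfl⟩ := exists_eq_preimage_fin_of_mem_measurableCylinders hs
  have hproj : Measurable fun (ω : ℕ → ℝ) (i : Fin n) => ω i := by fun_prop
  rw [← Measure.map_apply hproj hB, ← Measure.map_apply hproj hB, hP, hQ]
  refine (pi_gaussianReal_le_mul_add_div (fun i => u i) (fun i => v i) hw hK B).trans ?_
  gcongr
  rw [Fin.sum_univ_eq_sum_range (fun i => (u i - v i) ^ 2 / w)]
  exact (hsum.div_const _).sum_le_tsum _ fun _ _ => by positivity

end ProbabilityTheory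

/-- Finite cumulative squared signal-to-noise implies no resolution: if
`∑ aₙ² < ∞`, the infinite product measures `P₊ = ⨂ N(aₙ,1)` and `P₋ = ⨂ N(0,1)`
on `ℕ → ℝ` (characterized by their finite-dimensional marginals) are mutually
absolutely continuous (equivalent). -/
theorem kakutani_equivalence_of_summable (a : ℕ → ℝ)
    (hsum : Summable (fun n => (a n)^2))
    (Pp Pm : Measure (ℕ → ℝ)) [IsProbabilityMeasure Pp] [IsProbabilityMeasure Pm]
    (hPp : ∀ n : ℕ, Measure.map (fun ω (i : Fin n) => ω i) Pp =
      Measure.pi fun i : Fin n => gaussianReal (a i) 1)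
    (hPm : ∀ n : ℕ, Measure.map (fun ω (i : Fin n) => ω i) Pm =
      Measure.pi fun _ : Fin n => gaussianReal 0 1) :
    Pp ≪ Pm ∧ Pm ≪ Pp :=
  ⟨absolutelyContinuous_of_gaussianReal_marginals one_ne_zero a 0 (by simpa using hsum)
      Pp Pm hPp hPm,
    absolutelyContinuous_of_gaussianReal_marginals one_ne_zero 0 a (by simpa using hsum)
      Pm Pp hPm hPp⟩
end

section
/- Let a : ℕ → ℝ with ∑ₙ aₙ² = ∞, let P₋ := ⨂_{n∈ℕ} gaussianReal(0, 1) be the infinite product measure on Ω = (ℕ → ℝ), and for ω ∈ Ω define the log-likelihood-ratio partial sums Sₙ(ω) := ∑_{i<n} (aᵢ·ωᵢ − aᵢ²/2). Then Sₙ → −∞ P₋-almost surely. (Under the status quo hypothesis, the log-likelihood ratio of 'change' versus 'status quo' diverges to −∞: inferential resolution lim l_t = −∞ occurs almost surely.) -/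
/-!
Under the product of standard Gaussians, `exp (Sₙ / 2 + Aₙ / 8)` with `Aₙ = ∑_{i<n} aᵢ²` is the
product of the independent mean-one factors `exp (aᵢ ωᵢ / 2 - aᵢ² / 8)`, hence a nonnegative
martingale. By Doob's maximal inequality, the probability that `Sₖ ≥ -C` for some `k ≥ m` is at
most `exp (C / 2 - Aₘ / 8)`, which tends to zero since `Aₘ → ∞`.
-/

open MeasureTheory ProbabilityTheory Filter
open scoped Topology

namespace MeasureTheory.Measure

variable {X : ℕ → Type*} [∀ i, MeasurableSpace (X i)] {μ : (i : ℕ) → Measure (X i)}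
  [∀ i, IsProbabilityMeasure (μ i)]

lemma eq_infinitePi_of_map_fin {ν : Measure (Π i, X i)}
    (h : ∀ n, ν.map (fun ω (i : Fin n) ↦ ω i) = Measure.pi fun i : Fin n ↦ μ i) :
    ν = infinitePi μ := by
  classical
  refine eq_infinitePi μ fun s t ht ↦ ?_
  obtain ⟨n, hsn⟩ : ∃ n, s ⊆ Finset.range n :=
    ⟨s.sup id + 1, fun i hi ↦ Finset.mem_range.mpr (Nat.lt_succ_of_le (s.le_sup (f := id) hi))⟩
  set t' : (i : ℕ) → Set (X i) := fun i ↦ if i ∈ s then t i else Set.univ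
  have ht' (i : ℕ) : MeasurableSet (t' i) := by
    simp only [t']
    split_ifs
    exacts [ht i, .univ]
  have hbox : Set.pi s t = (fun ω (i : Fin n) ↦ ω i) ⁻¹' Set.univ.pi fun i : Fin n ↦ t' i := by
    ext ω
    simp only [Set.mem_pi, Finset.mem_coe, Set.mem_preimage, Set.mem_univ, true_imp_iff, t']
    refine ⟨fun hω i ↦ ?_, fun hω i hi ↦ by simpa [hi] using hω ⟨i, Finset.mem_range.mp (hsn hi)⟩⟩
    split_ifs with hi
    exacts [hω i hi, trivial]
  calc ν (Set.pi s t)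
      = ∏ i : Fin n, μ i (t' i) := by
        rw [hbox, ← map_apply (by fun_prop) (.univ_pi fun i : Fin n ↦ ht' i), h, pi_pi]
    _ = ∏ i ∈ Finset.range n, μ i (t' i) := Fin.prod_univ_eq_prod_range (fun i ↦ μ i (t' i)) n
    _ = ∏ i ∈ s, μ i (t i) := by
        refine (Finset.prod_subset hsn fun i _ hi ↦ by simp [t', hi]).symm.trans ?_
        exact Finset.prod_congr rfl fun i hi ↦ by simp [t', hi]

end MeasureTheory.Measure

namespace ProbabilityTheory

lemma integrable_exp_mul_sub_gaussianReal (m : ℝ) (v : NNReal) (t c : ℝ) :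
    Integrable (fun x ↦ Real.exp (t * x - c)) (gaussianReal m v) := by
  simp_rw [sub_eq_add_neg, Real.exp_add]
  exact (integrable_exp_mul_gaussianReal t).mul_const _

lemma integral_exp_mul_sub_gaussianReal (m : ℝ) (v : NNReal) (t : ℝ) :
    ∫ x, Real.exp (t * x - (m * t + v * t ^ 2 / 2)) ∂gaussianReal m v = 1 := by
  simp_rw [sub_eq_add_neg, Real.exp_add]
  rw [integral_mul_const, ← mgf, mgf_fun_id_gaussianReal, ← Real.exp_add, add_neg_cancel,
    Real.exp_zero]

section PartialProducts

variable {Ω : Type*} {mΩ : MeasurableSpace Ω} {μ : Measure Ω} [IsProbabilityMeasure μ]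
  {X : ℕ → Ω → ℝ}

lemma iIndepFun.integrable_finsetProd (hind : iIndepFun X μ) (hX : ∀ i, Measurable (X i))
    (hint : ∀ i, Integrable (X i) μ) (s : Finset ℕ) : Integrable (∏ i ∈ s, X i) μ := by
  classical
  induction s using Finset.induction_on with
  | empty => exact integrable_const 1
  | insert i s hi ih =>
    rw [Finset.prod_insert hi, mul_comm]
    exact (hind.indepFun_finsetProd_of_notMem hX hi).integrable_mul ih (hint i)

lemma iIndepFun.martingale_prod_range_succ (hind : iIndepFun X μ) (hX : ∀ i, Measurable (X i))
    (hint : ∀ i, Integrable (X i) μ) (hmean : ∀ i, μ[X i] = 1) :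
    Martingale (fun n ↦ ∏ i ∈ Finset.range (n + 1), X i)
      (Filtration.natural X fun i ↦ (hX i).stronglyMeasurable) μ := by
  set 𝒢 := Filtration.natural X fun i ↦ (hX i).stronglyMeasurable
  have hadapted : StronglyAdapted 𝒢 fun n ↦ ∏ i ∈ Finset.range (n + 1), X i := fun n ↦
    Finset.stronglyMeasurable_prod _ fun i hi ↦
      Filtration.stronglyAdapted_natural (fun i ↦ (hX i).stronglyMeasurable) i |>.mono
        (𝒢.mono (Nat.lt_succ_iff.mp (Finset.mem_range.mp hi)))
  refine martingale_nat hadapted (fun n ↦ hind.integrable_finsetProd hX hint _) fun n ↦ ?_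
  have hindep : Indep (MeasurableSpace.comap (X (n + 1)) inferInstance) (𝒢 n) μ := by
    have := indep_iSup_of_disjoint (fun i ↦ (hX i).comap_le) hind.iIndep
      (S := {n + 1}) (T := Set.Iic n) (by simp)
    simpa [𝒢, Filtration.natural] using this
  have hcond : μ[X (n + 1) | 𝒢 n] =ᵐ[μ] fun _ ↦ 1 := by
    rw [← hmean (n + 1)]
    exact condExp_indep_eq (hX _).comap_le (𝒢.le n)
      (Measurable.of_comap_le le_rfl).stronglyMeasurable hindep
  have hsucc : ∏ i ∈ Finset.range (n + 1 + 1), X i =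
      (∏ i ∈ Finset.range (n + 1), X i) * X (n + 1) :=
    Finset.prod_range_succ X (n + 1)
  filter_upwards [condExp_mul_of_stronglyMeasurable_left (hadapted n)
    (hsucc ▸ hind.integrable_finsetProd hX hint _) (hint (n + 1)), hcond] with ω hω hω'
  rw [hsucc, hω, Pi.mul_apply, hω', mul_one]

end PartialProducts

lemma martingale_prod_range_succ_infinitePi {E : Type*} [MeasurableSpace E]
    {μ : ℕ → Measure E} [∀ i, IsProbabilityMeasure (μ i)] {g : ℕ → E → ℝ}
    (hg : ∀ i, Measurable (g i)) (hint : ∀ i, Integrable (g i) (μ i))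
    (hmean : ∀ i, ∫ x, g i x ∂μ i = 1) :
    Martingale (fun n ↦ ∏ i ∈ Finset.range (n + 1), fun ω : ℕ → E ↦ g i (ω i))
      (Filtration.natural (fun i ω ↦ g i (ω i))
        fun i ↦ ((hg i).comp (measurable_pi_apply i)).stronglyMeasurable)
      (Measure.infinitePi μ) := by
  have heval := measurePreserving_eval_infinitePi μ
  refine (iIndepFun_infinitePi hg).martingale_prod_range_succ (fun i ↦ by fun_prop)
    (fun i ↦ ((heval i).integrable_comp (hg i).aestronglyMeasurable).mpr (hint i)) fun i ↦ ?_
  have := integral_map (heval i).aemeasurable (hg i).aestronglyMeasurable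
  rwa [(heval i).map_eq, hmean, eq_comm] at this

end ProbabilityTheory

namespace MeasureTheory

variable {Ω : Type*} {mΩ : MeasurableSpace Ω} {μ : Measure Ω} [IsFiniteMeasure μ]
  {𝒢 : Filtration ℕ mΩ} {f : ℕ → Ω → ℝ}

lemma Martingale.measure_exists_ge_le (hf : Martingale f 𝒢 μ) (hnonneg : 0 ≤ f) {ε : ℝ}
    (hε : 0 < ε) : μ {ω | ∃ n, ε ≤ f n ω} ≤ ENNReal.ofReal (μ[f 0] / ε) := by
  set A : ℕ → Set Ω := fun N ↦
    {ω | ε ≤ (Finset.range (N + 1)).sup' Finset.nonempty_range_add_one fun k ↦ f k ω}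
  have hunion : {ω | ∃ n, ε ≤ f n ω} = ⋃ N, A N := by
    ext ω
    simp only [A, Set.mem_ofPred_eq, Set.mem_iUnion, Finset.le_sup'_iff, Finset.mem_range]
    exact ⟨fun ⟨n, hn⟩ ↦ ⟨n, n, n.lt_succ_self, hn⟩, fun ⟨_, n, _, hn⟩ ↦ ⟨n, hn⟩⟩
  have hmono : Monotone A := by
    intro N M hNM ω hω
    simp only [A, Set.mem_ofPred_eq, Finset.le_sup'_iff, Finset.mem_range] at hω ⊢
    obtain ⟨k, hk, h⟩ := hω
    exact ⟨k, by omega, h⟩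
  rw [hunion, hmono.measure_iUnion]
  refine iSup_le fun N ↦ ?_
  have hmax := maximal_ineq hf.submartingale hnonneg (ε := ε.toNNReal) N
  rw [Real.coe_toNNReal _ hε.le] at hmax
  have hint : ∫ ω in A N, f N ω ∂μ ≤ μ[f 0] := by
    have hmean : μ[f N] = μ[f 0] := by
      simpa using (hf.setIntegral_eq N.zero_le MeasurableSet.univ).symm
    exact (setIntegral_le_integral (hf.integrable N) (ae_of_all _ (hnonneg N))).trans_eq hmean
  rw [ENNReal.ofReal_div_of_pos hε, ENNReal.le_div_iff_mul_le (by simp [hε]) (by simp), mul_comm]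
  exact hmax.trans (ENNReal.ofReal_le_ofReal hint)

lemma Martingale.ae_tendsto_atBot_of_exp_add {Y : ℕ → Ω → ℝ} {b : ℕ → ℝ} (hb : Monotone b)
    (hb_top : Tendsto b atTop atTop) (hM : Martingale (fun n ω ↦ Real.exp (Y n ω + b n)) 𝒢 μ) :
    ∀ᵐ ω ∂μ, Tendsto (Y · ω) atTop atBot := by
  have hnull (C : ℝ) : μ {ω | ∃ᶠ k in atTop, C ≤ Y k ω} = 0 := by
    have hbound (m : ℕ) : μ {ω | ∃ᶠ k in atTop, C ≤ Y k ω} ≤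
        ENNReal.ofReal (μ[fun ω ↦ Real.exp (Y 0 ω + b 0)] / Real.exp (C + b m)) := by
      refine (measure_mono fun ω hω ↦ ?_).trans
        (hM.measure_exists_ge_le (fun n ω ↦ (Real.exp_pos _).le) (Real.exp_pos _))
      obtain ⟨k, hCk, hmk⟩ := (hω.and_eventually (eventually_ge_atTop m)).exists
      exact ⟨k, Real.exp_le_exp.mpr (add_le_add hCk (hb hmk))⟩
    have hlim : Tendsto (fun m ↦ ENNReal.ofReal
        (μ[fun ω ↦ Real.exp (Y 0 ω + b 0)] / Real.exp (C + b m))) atTop (𝓝 0) := by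
      rw [← ENNReal.ofReal_zero]
      refine ENNReal.tendsto_ofReal (tendsto_const_nhds.div_atTop ?_)
      exact Real.tendsto_exp_atTop.comp (tendsto_atTop_add_const_left _ _ hb_top)
    exact le_antisymm (ge_of_tendsto' hlim hbound) zero_le
  have hae : ∀ᵐ ω ∂μ, ∀ C : ℕ, ¬ ∃ᶠ k in atTop, -(C : ℝ) ≤ Y k ω :=
    ae_all_iff.mpr fun C ↦ measure_eq_zero_iff_ae_notMem.mp (hnull _)
  filter_upwards [hae] with ω hω
  refine tendsto_atBot.mpr fun x ↦ ?_
  filter_upwards [not_frequently.mp (hω ⌈-x⌉₊)] with k hk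
  linarith [Nat.le_ceil (-x), not_le.mp hk]

end MeasureTheory

theorem logLR_tendsto_atBot_of_resolution_general (a : ℕ → ℝ)
    (hdiv : ¬ Summable (fun n => (a n)^2))
    (Pm : Measure (ℕ → ℝ))
    (hPm : ∀ n : ℕ, Measure.map (fun ω (i : Fin n) => ω i) Pm =
      Measure.pi fun _ : Fin n => gaussianReal 0 1)
    (S : ℕ → (ℕ → ℝ) → ℝ)
    (hS : ∀ n ω, S n ω = ∑ i ∈ Finset.range n, (a i * ω i - (a i)^2 / 2)) :
    ∀ᵐ ω ∂Pm, Tendsto (fun n => S n ω) atTop atBot := by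
  obtain rfl : Pm = Measure.infinitePi fun _ ↦ gaussianReal 0 1 :=
    Measure.eq_infinitePi_of_map_fin hPm
  have hmart := martingale_prod_range_succ_infinitePi
    (g := fun i x ↦ Real.exp (a i / 2 * x - (a i / 2) ^ 2 / 2)) (fun i ↦ by fun_prop)
    (fun i ↦ integrable_exp_mul_sub_gaussianReal 0 1 _ _)
    (fun i ↦ by simpa using integral_exp_mul_sub_gaussianReal 0 1 (a i / 2))
  have hprod : (fun n ↦ ∏ i ∈ Finset.range (n + 1),
      fun ω : ℕ → ℝ ↦ Real.exp (a i / 2 * ω i - (a i / 2) ^ 2 / 2)) =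
      fun n ω ↦ Real.exp (S (n + 1) ω / 2 + (∑ i ∈ Finset.range (n + 1), a i ^ 2) / 8) := by
    funext n ω
    rw [Finset.prod_apply, ← Real.exp_sum, hS, Finset.sum_div, Finset.sum_div,
      ← Finset.sum_add_distrib]
    exact congrArg Real.exp (Finset.sum_congr rfl fun i _ ↦ by ring)
  rw [hprod] at hmart
  have hA : Tendsto (fun n ↦ ∑ i ∈ Finset.range n, a i ^ 2) atTop atTop :=
    (not_summable_iff_tendsto_nat_atTop_of_nonneg fun n ↦ sq_nonneg _).mp hdiv
  have hA_mono : Monotone fun n ↦ ∑ i ∈ Finset.range n, a i ^ 2 :=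
    (Finset.sum_mono_set_of_nonneg fun i ↦ sq_nonneg (a i)).comp Finset.range_mono
  filter_upwards [hmart.ae_tendsto_atBot_of_exp_add
    (fun m n hmn ↦ div_le_div_of_nonneg_right (hA_mono (Nat.succ_le_succ hmn)) (by norm_num))
    ((hA.comp (tendsto_add_atTop_nat 1)).atTop_div_const (by norm_num))] with ω hω
  exact (tendsto_add_atTop_iff_nat 1).mp ((tendsto_div_const_atBot_of_pos two_pos).mp hω)

/-- Inferential resolution under the status quo: if `∑ aₙ² = ∞` and `P₋` is the
infinite product measure `⨂ N(0,1)` on `ℕ → ℝ` (characterized by its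
finite-dimensional marginals), then the log-likelihood-ratio partial sums
`Sₙ(ω) = ∑_{i<n} (aᵢωᵢ − aᵢ²/2)` tend to `−∞` `P₋`-almost surely. -/
theorem logLR_tendsto_atBot_of_resolution (a : ℕ → ℝ)
    (hdiv : ¬ Summable (fun n => (a n)^2))
    (Pm : Measure (ℕ → ℝ)) [IsProbabilityMeasure Pm]
    (hPm : ∀ n : ℕ, Measure.map (fun ω (i : Fin n) => ω i) Pm =
      Measure.pi fun _ : Fin n => gaussianReal 0 1)
    (S : ℕ → (ℕ → ℝ) → ℝ)
    (hS : ∀ n ω, S n ω = ∑ i ∈ Finset.range n, (a i * ω i - (a i)^2 / 2)) :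
    ∀ᵐ ω ∂Pm, Tendsto (fun n => S n ω) atTop atBot :=
  logLR_tendsto_atBot_of_resolution_general a hdiv Pm hPm S hS
end

section
/- Let π, Π ∈ (0,1), K := O(π)/O(Π), and let S > 0 (risk impact) and s > 0 (data signal-to-noise). Define the averaged inferential drift μ := S·(π − Π)·(σ(Π)·s)² and volatility σ_D := S·σ(Π)²·s. Then the price-of-diffusion-risk satisfies μ/σ_D = (K^{1/2} − K^{−1/2})·σ(Π)·σ(π)·s, and equivalently μ = ((K^{1/2} − K^{−1/2})/S)·(σ(π)/σ(Π))·σ_D². (The paper's exact price-of-risk versus volatility relationship, whose expansion in K − 1 recovers the ubiquitous proportionality of drift to squared volatility.) -/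
/-!
With `a = π(1 − P)` and `b = P(1 − π)` the odds ratio is `K = a / b` and the product of the
belief volatilities is `σ(P)σ(π) = √(ab)`, so `(√K − 1/√K)·σ(P)σ(π) = a − b = π − P`.
Both identities then follow by substituting this expression for `π − P` into `μ`.
-/

theorem Real.sqrt_div_sub_sqrt_div_inv_mul_sqrt_mul {a b : ℝ} (ha : 0 < a) (hb : 0 < b) :
    (√(a / b) - √(a / b)⁻¹) * √(a * b) = a - b := by
  rw [inv_div, Real.sqrt_div ha.le, Real.sqrt_div hb.le, Real.sqrt_mul ha.le]
  have hsa : 0 < √a := Real.sqrt_pos.mpr ha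
  have hsb : 0 < √b := Real.sqrt_pos.mpr hb
  field_simp
  rw [Real.sq_sqrt ha.le, Real.sq_sqrt hb.le]

theorem odds_div_odds (p q : ℝ) : odds p / odds q = p * (1 - q) / (q * (1 - p)) := by
  rw [odds, odds, div_div_div_eq, mul_comm (1 - p)]

theorem beliefVol_pos {p : ℝ} (hp : p ∈ Set.Ioo (0 : ℝ) 1) : 0 < beliefVol p :=
  Real.sqrt_pos.mpr (mul_pos hp.1 (sub_pos.mpr hp.2))

theorem beliefVol_mul_beliefVol {p q : ℝ} (hq : q ∈ Set.Icc (0 : ℝ) 1) :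
    beliefVol q * beliefVol p = √(p * (1 - q) * (q * (1 - p))) := by
  rw [beliefVol, beliefVol, ← Real.sqrt_mul (mul_nonneg hq.1 (sub_nonneg.mpr hq.2))]
  ring_nf

theorem sqrt_odds_div_sub_inv_mul_beliefVol {p q : ℝ} (hp : p ∈ Set.Ioo (0 : ℝ) 1)
    (hq : q ∈ Set.Ioo (0 : ℝ) 1) :
    (√(odds p / odds q) - √(odds p / odds q)⁻¹) * beliefVol q * beliefVol p = p - q := by
  rw [mul_assoc, beliefVol_mul_beliefVol (Set.Ioo_subset_Icc_self hq), odds_div_odds,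
    Real.sqrt_div_sub_sqrt_div_inv_mul_sqrt_mul (mul_pos hp.1 (sub_pos.mpr hq.2))
      (mul_pos hq.1 (sub_pos.mpr hp.2))]
  ring

/-- The paper's exact price-of-risk versus volatility relationship: with
`K = odds π / odds P`, averaged inferential drift `μ = S(π − P)(σ(P)s)²` and
volatility `σ_D = S σ(P)² s`, one has
`μ/σ_D = (K^{1/2} − K^{−1/2})·σ(P)·σ(π)·s` and
`μ = ((K^{1/2} − K^{−1/2})/S)·(σ(π)/σ(P))·σ_D²`. -/
theorem price_of_risk_vs_volatility (π P : ℝ) (hπ : π ∈ Set.Ioo (0:ℝ) 1)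
    (hP : P ∈ Set.Ioo (0:ℝ) 1) (K : ℝ) (hK : K = odds π / odds P)
    (S s : ℝ) (hS : 0 < S) (hs : 0 < s)
    (μ σD : ℝ) (hμ : μ = S * (π - P) * (beliefVol P * s)^2)
    (hσD : σD = S * (beliefVol P)^2 * s) :
    μ / σD = (Real.sqrt K - Real.sqrt K⁻¹) * beliefVol P * beliefVol π * s ∧
    μ = ((Real.sqrt K - Real.sqrt K⁻¹) / S) * (beliefVol π / beliefVol P) * σD^2 := by
  have hdrift := sqrt_odds_div_sub_inv_mul_beliefVol hπ hP
  rw [← hK] at hdrift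
  have hσP := beliefVol_pos hP
  subst hμ hσD
  constructor
  · rw [div_eq_iff (by positivity), ← hdrift]
    ring
  · rw [← hdrift]
    field_simp
end
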